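/- Upper bound on the α-unimodal worst-case probability: let α > 0, 𝒳 = {x ∈ ℝ^2 : x ≥ 0, ‖x‖ ≤ 2} and S = {x ∈ ℝ^2 : x ≥ 0, 1 ≤ ‖x‖ ≤ 2}. If f : 𝒳 → [0,∞) is Lebesgue measurable, α-unimodal about (0,0) on 𝒳, and ∫_𝒳 f(x) dx = 1, then ∫_S f(x) dx ≤ (2^α − 1)/2^α. Consequently val(P_α) ≤ (2^α − 1)/2^α. -/
import Mathlib

open MeasureTheory Filter Set Pointwise

noncomputable section

namespace AlphaUnimodalDRO

/-- The domain `𝒳 = {x ∈ ℝ² : x ≥ 0, ‖x‖ ≤ 2}` (Euclidean norm). -/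
def domX : Set (EuclideanSpace ℝ (Fin 2)) := {x | (∀ i, 0 ≤ x i) ∧ ‖x‖ ≤ 2}

/-- The target region `S = {x ∈ ℝ² : x ≥ 0, 1 ≤ ‖x‖ ≤ 2}`. -/
def Sreg : Set (EuclideanSpace ℝ (Fin 2)) := {x | (∀ i, 0 ≤ x i) ∧ 1 ≤ ‖x‖ ∧ ‖x‖ ≤ 2}

/-- `f` is `α`-unimodal about the mode `(0,0)` on `𝒳`: for every nonzero `x`,
`t ↦ t^{2-α} f(t • x)` is non-increasing on `{t > 0 : t • x ∈ 𝒳}`. -/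
def AlphaUnimodal (α : ℝ) (f : EuclideanSpace ℝ (Fin 2) → ℝ) : Prop :=
  ∀ x : EuclideanSpace ℝ (Fin 2), x ≠ 0 → ∀ s t : ℝ, 0 < s → s ≤ t →
    s • x ∈ domX → t • x ∈ domX →
    t ^ (2 - α) * f (t • x) ≤ s ^ (2 - α) * f (s • x)

/-- The optimal value `val(P_α)`: the worst-case probability of `S` over all
`α`-unimodal densities on `𝒳`. -/
def valPα (α : ℝ) : ℝ :=
  sSup {r : ℝ | ∃ f : EuclideanSpace ℝ (Fin 2) → ℝ, Measurable f ∧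
    (∀ x ∈ domX, 0 ≤ f x) ∧ AlphaUnimodal α f ∧
    (∫ x in domX, f x) = 1 ∧ r = ∫ x in Sreg, f x}

/-- The inner region `B = {x ≥ 0, ‖x‖ ≤ 1}`. -/
def Breg : Set (EuclideanSpace ℝ (Fin 2)) := {x | (∀ i, 0 ≤ x i) ∧ ‖x‖ ≤ 1}

lemma isClosed_nonneg : IsClosed {x : EuclideanSpace ℝ (Fin 2) | ∀ i, 0 ≤ x i} := by
  have : {x : EuclideanSpace ℝ (Fin 2) | ∀ i, 0 ≤ x i} =
      ⋂ i, (fun x : EuclideanSpace ℝ (Fin 2) => x i) ⁻¹' Ici 0 := by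
    ext x; simp [mem_iInter]
  rw [this]
  exact isClosed_iInter fun i => isClosed_Ici.preimage (EuclideanSpace.proj i).continuous

lemma isClosed_domX : IsClosed domX :=
  isClosed_nonneg.inter (isClosed_le continuous_norm continuous_const)

lemma isClosed_Breg : IsClosed Breg :=
  isClosed_nonneg.inter (isClosed_le continuous_norm continuous_const)

lemma isClosed_Sreg : IsClosed Sreg :=
  isClosed_nonneg.inter ((isClosed_le continuous_const continuous_norm).inter
    (isClosed_le continuous_norm continuous_const))

lemma half_smul_mem_Breg_iff (x : EuclideanSpace ℝ (Fin 2)) :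
    ((1/2 : ℝ) • x ∈ Breg) ↔ x ∈ domX := by
  have hnorm : ‖(1/2 : ℝ) • x‖ = (1/2) * ‖x‖ := by
    rw [norm_smul]; norm_num
  constructor
  · rintro ⟨h1, h2⟩
    refine ⟨fun i => ?_, ?_⟩
    · have := h1 i
      simp only [PiLp.smul_apply, smul_eq_mul] at this
      linarith
    · rw [hnorm] at h2; linarith
  · rintro ⟨h1, h2⟩
    refine ⟨fun i => ?_, ?_⟩
    · simp only [PiLp.smul_apply, smul_eq_mul]
      have := h1 i; linarith
    · rw [hnorm]; linarith

lemma half_smul_domX_eq : (1/2 : ℝ) • domX = Breg := by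
  ext y
  constructor
  · rintro ⟨x, hx, rfl⟩
    exact (half_smul_mem_Breg_iff x).2 hx
  · intro hy
    refine ⟨(2 : ℝ) • y, ?_, ?_⟩
    · rw [← half_smul_mem_Breg_iff]
      have : (1/2 : ℝ) • ((2:ℝ) • y) = y := by rw [smul_smul]; norm_num
      rw [this]; exact hy
    · show (1/2 : ℝ) • ((2:ℝ) • y) = y
      rw [smul_smul]; norm_num

/-- **Upper bound on the α-unimodal worst-case probability**: any
`α`-unimodal density on `𝒳` puts mass at most `(2^α - 1)/2^α` on `S`;
consequently `val(P_α) ≤ (2^α - 1)/2^α`. -/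
theorem alpha_unimodal_upper_bound (α : ℝ) (hα : 0 < α) :
    (∀ f : EuclideanSpace ℝ (Fin 2) → ℝ, Measurable f →
      (∀ x ∈ domX, 0 ≤ f x) → AlphaUnimodal α f → (∫ x in domX, f x) = 1 →
      (∫ x in Sreg, f x) ≤ ((2 : ℝ) ^ α - 1) / (2 : ℝ) ^ α) ∧
    valPα α ≤ ((2 : ℝ) ^ α - 1) / (2 : ℝ) ^ α := by
  have h2pos : (0:ℝ) < (2:ℝ) ^ α := Real.rpow_pos_of_pos (by norm_num) α
  have h2ge1 : (1:ℝ) ≤ (2:ℝ) ^ α := by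
    have := Real.rpow_le_rpow_of_exponent_le (by norm_num : (1:ℝ) ≤ 2) hα.le
    simpa using this
  have hbound_nonneg : (0:ℝ) ≤ ((2 : ℝ) ^ α - 1) / (2 : ℝ) ^ α :=
    div_nonneg (by linarith) h2pos.le
  have main : ∀ f : EuclideanSpace ℝ (Fin 2) → ℝ, Measurable f →
      (∀ x ∈ domX, 0 ≤ f x) → AlphaUnimodal α f → (∫ x in domX, f x) = 1 →
      (∫ x in Sreg, f x) ≤ ((2 : ℝ) ^ α - 1) / (2 : ℝ) ^ α := by
    intro f hf hfnn huni hint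
    have hdomX : MeasurableSet domX := isClosed_domX.measurableSet
    have hBreg : MeasurableSet Breg := isClosed_Breg.measurableSet
    have hSreg : MeasurableSet Sreg := isClosed_Sreg.measurableSet
    have hBsub : Breg ⊆ domX := fun x hx => ⟨hx.1, le_trans hx.2 (by norm_num)⟩
    have hSsub : Sreg ⊆ domX := fun x hx => ⟨hx.1, hx.2.2⟩
    -- f is integrable on domX
    have hfint : IntegrableOn f domX := by
      by_contra h
      rw [integral_undef h] at hint
      exact one_ne_zero hint.symm
    have hfintB : IntegrableOn f Breg := hfint.mono_set hBsub
    have hfintS : IntegrableOn f Sreg := hfint.mono_set hSsub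
    -- integrability of x ↦ f ((1/2) • x) on domX
    have hind : ∀ x, indicator domX (fun y => f ((1/2:ℝ) • y)) x
        = indicator Breg f ((1/2:ℝ) • x) := by
      intro x
      by_cases hx : x ∈ domX
      · rw [indicator_of_mem hx, indicator_of_mem ((half_smul_mem_Breg_iff x).2 hx)]
      · rw [indicator_of_notMem hx,
          indicator_of_notMem (fun h => hx ((half_smul_mem_Breg_iff x).1 h))]
    have hgint : IntegrableOn (fun x => f ((1/2:ℝ) • x)) domX := by
      have h1 : Integrable (indicator domX fun y => f ((1/2:ℝ) • y)) volume := by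
        have heq : indicator domX (fun y => f ((1/2:ℝ) • y))
            = fun x => indicator Breg f ((1/2:ℝ) • x) := funext hind
        rw [heq]
        exact ((integrable_indicator_iff hBreg).2 hfintB).comp_smul (by norm_num)
      exact (integrable_indicator_iff hdomX).1 h1
    -- the key exponent identity
    have hhalf : ((1:ℝ)/2) ^ (2 - α) = (2:ℝ) ^ (α - 2) := by
      rw [one_div, ← Real.rpow_neg_one (2:ℝ),
        ← Real.rpow_mul (by norm_num : (0:ℝ) ≤ 2)]
      congr 1; ring
    have hp : (0:ℝ) < (2:ℝ) ^ (α - 2) := Real.rpow_pos_of_pos (by norm_num) _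
    -- pointwise a.e. inequality on domX
    have hkey : ∀ᵐ x ∂(volume.restrict domX),
        f x ≤ (2:ℝ) ^ (α - 2) * f ((1/2:ℝ) • x) := by
      rw [ae_restrict_iff' hdomX]
      have hz : (volume : Measure (EuclideanSpace ℝ (Fin 2)))
          {(0 : EuclideanSpace ℝ (Fin 2))} = 0 := measure_singleton 0
      filter_upwards [measure_eq_zero_iff_ae_notMem.1 hz] with x hx0 hx
      have h1 : ((1/2:ℝ)) • x ∈ domX := hBsub ((half_smul_mem_Breg_iff x).2 hx)
      have := huni x hx0 (1/2) 1 (by norm_num) (by norm_num) h1 (by simpa using hx)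
      rw [one_smul, Real.one_rpow, one_mul, hhalf] at this
      exact this
    -- integrate the inequality
    have hmono : (∫ x in domX, f x) ≤
        ∫ x in domX, (2:ℝ) ^ (α - 2) * f ((1/2:ℝ) • x) :=
      integral_mono_ae hfint (hgint.const_mul _) hkey
    -- change of variables
    have hcov : (∫ x in domX, f ((1/2:ℝ) • x)) = 4 * ∫ x in Breg, f x := by
      have := Measure.setIntegral_comp_smul_of_pos (volume : Measure (EuclideanSpace ℝ (Fin 2)))
        f domX (by norm_num : (0:ℝ) < 1/2)
      rw [this, half_smul_domX_eq]
      have hrank : Module.finrank ℝ (EuclideanSpace ℝ (Fin 2)) = 2 := by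
        simp [finrank_euclideanSpace]
      rw [hrank]
      norm_num
    have hIB : 1 ≤ (2:ℝ) ^ α * ∫ x in Breg, f x := by
      have h1 : (∫ x in domX, (2:ℝ) ^ (α - 2) * f ((1/2:ℝ) • x))
          = (2:ℝ) ^ (α - 2) * ∫ x in domX, f ((1/2:ℝ) • x) := by
        rw [integral_const_mul]
      have h2 : (2:ℝ) ^ (α - 2) * 4 = (2:ℝ) ^ α := by
        have : (2:ℝ) ^ (α - 2) * (2:ℝ) ^ (2:ℝ) = (2:ℝ) ^ α := by
          rw [← Real.rpow_add (by norm_num : (0:ℝ) < 2)]; ring_nf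
        have h4 : (2:ℝ) ^ (2:ℝ) = 4 := by
          rw [show (2:ℝ) = ((2:ℕ):ℝ) from by norm_num, Real.rpow_natCast]; norm_num
        rw [← h4]; exact this
      calc (1:ℝ) = ∫ x in domX, f x := hint.symm
      _ ≤ ∫ x in domX, (2:ℝ) ^ (α - 2) * f ((1/2:ℝ) • x) := hmono
      _ = (2:ℝ) ^ (α - 2) * (4 * ∫ x in Breg, f x) := by rw [h1, hcov]
      _ = (2:ℝ) ^ α * ∫ x in Breg, f x := by rw [← mul_assoc, h2]
    -- B and S are a.e. disjoint and both inside domX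
    have hdisj : AEDisjoint (volume : Measure (EuclideanSpace ℝ (Fin 2))) Breg Sreg := by
      refine measure_mono_null (fun x hx => ?_) (Measure.addHaar_sphere volume 0 1)
      have : ‖x‖ = 1 := le_antisymm hx.1.2 hx.2.2.1
      simpa [mem_sphere_zero_iff_norm] using this
    have hsplit : (∫ x in Breg ∪ Sreg, f x)
        = (∫ x in Breg, f x) + ∫ x in Sreg, f x :=
      integral_union_ae hdisj hSreg.nullMeasurableSet hfintB hfintS
    have hfnn_ae : 0 ≤ᵐ[(volume : Measure (EuclideanSpace ℝ (Fin 2))).restrict domX] f := by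
      rw [EventuallyLE, ae_restrict_iff' hdomX]
      exact Filter.Eventually.of_forall fun x hx => hfnn x hx
    have hle : (∫ x in Breg ∪ Sreg, f x) ≤ ∫ x in domX, f x :=
      setIntegral_mono_set hfint hfnn_ae
        (HasSubset.Subset.eventuallyLE (union_subset hBsub hSsub))
    have hsum : (∫ x in Breg, f x) + (∫ x in Sreg, f x) ≤ 1 := by
      rw [← hsplit, ← hint]; exact hle
    have hIBge : (1:ℝ) / (2:ℝ) ^ α ≤ ∫ x in Breg, f x := by
      rw [div_le_iff₀ h2pos] at *
      nlinarith [hIB]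
    have : (∫ x in Sreg, f x) ≤ 1 - 1 / (2:ℝ) ^ α := by linarith
    calc (∫ x in Sreg, f x) ≤ 1 - 1 / (2:ℝ) ^ α := this
    _ = ((2:ℝ) ^ α - 1) / (2:ℝ) ^ α := by field_simp
  refine ⟨main, ?_⟩
  apply Real.sSup_le _ hbound_nonneg
  rintro r ⟨f, hf, hfnn, huni, hint, rfl⟩
  exact main f hf hfnn huni hint

end AlphaUnimodalDRO
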